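/- Let H be an ℓ-graph and let ε > 0. There exist N₀ and η > 0 such that if C is an ℓ-graph on N ≥ N₀ vertices containing at most η·N^{v(H)} copies of H, then e(C) ≤ (π(H) + ε)·C(N,ℓ). -/

import Mathlib

open Finset

/-- `C` (an ℓ-graph on `Fin N`, given by its edge set) contains a copy of the ℓ-graph `H`
with vertex type `α` and edge set `HE`. -/
def ContainsCopy {α : Type*} {N : ℕ} (HE : Finset (Finset α)) (C : Finset (Finset (Fin N))) :
    Prop :=
  ∃ f : α ↪ Fin N, ∀ e ∈ HE, e.map f ∈ C

/-- `ex(N, H)`: the maximum number of edges of an `H`-free ℓ-graph on `N` vertices. -/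
noncomputable def exNum {α : Type*} (ℓ : ℕ) (HE : Finset (Finset α)) (N : ℕ) : ℕ :=
  sSup {m : ℕ | ∃ C : Finset (Finset (Fin N)),
    (∀ e ∈ C, e.card = ℓ) ∧ ¬ ContainsCopy HE C ∧ C.card = m}

/-- The number of copies of `H` in `C`, counted as embeddings of the vertex set of `H`
into `Fin N` mapping each edge of `H` to an edge of `C`. -/
noncomputable def copyCount {α : Type*} (HE : Finset (Finset α)) {N : ℕ}
    (C : Finset (Finset (Fin N))) : ℕ :=
  Nat.card {f : α ↪ Fin N // ∀ e ∈ HE, e.map f ∈ C}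

/-!
Fix `M` with `ex(M, H) ≤ (π + ε/2)·C(M, ℓ)`. If `e(C) > (π + ε)·C(N, ℓ)`, averaging the edge count
of `C` over all `M`-subsets of the vertices shows that more than `(ε/2)·C(N, M)` of them span more
than `ex(M, H)` edges, and each of those contains a copy of `H`. A fixed copy, with `v = v(H)`
vertices, lies in only `C(N - v, M - v)` of the `M`-subsets, so `C` has more than
`(ε/2)·C(N, M) / C(N - v, M - v) = (ε/2)·C(N, v) / C(M, v)` copies, which is of order `N^v`.
-/

theorem sum_card_filter_subset_powersetCard {V : Type*} [Fintype V] [DecidableEq V] {ℓ M : ℕ}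
    {C : Finset (Finset V)} (hC : ∀ e ∈ C, #e = ℓ) (hℓM : ℓ ≤ M) :
    ∑ S ∈ powersetCard M univ, #(C.filter (· ⊆ S)) =
      #C * (Fintype.card V - ℓ).choose (M - ℓ) := by
  calc ∑ S ∈ powersetCard M univ, #(C.filter (· ⊆ S))
      = ∑ e ∈ C, #((powersetCard M univ).filter (e ⊆ ·)) := by
        simp only [card_filter]
        exact sum_comm
    _ = ∑ _e ∈ C, (Fintype.card V - ℓ).choose (M - ℓ) := by
        refine sum_congr rfl fun e he => ?_
        rw [card_filter_powersetCard_subset e univ M (subset_univ e) ((hC e he).trans_le hℓM),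
          card_univ, hC e he]
    _ = #C * (Fintype.card V - ℓ).choose (M - ℓ) := by rw [sum_const, smul_eq_mul]

theorem Nat.pow_le_two_pow_mul_factorial_mul_choose {N v : ℕ} (h : 2 * v ≤ N + 2) :
    N ^ v ≤ 2 ^ v * v.factorial * N.choose v :=
  calc N ^ v ≤ (2 * (N + 1 - v)) ^ v := Nat.pow_le_pow_left (by omega) v
    _ = 2 ^ v * (N + 1 - v) ^ v := mul_pow _ _ _
    _ ≤ 2 ^ v * N.descFactorial v := Nat.mul_le_mul_left _ (Nat.pow_sub_le_descFactorial N v)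
    _ = 2 ^ v * v.factorial * N.choose v := by
      rw [Nat.descFactorial_eq_factorial_mul_choose, mul_assoc]

section Supersaturation

variable {α : Type*} {ℓ M N : ℕ} {HE : Finset (Finset α)} {C : Finset (Finset (Fin N))}

theorem containsCopy_of_exNum_lt_card {C : Finset (Finset (Fin M))} (hC : ∀ e ∈ C, #e = ℓ)
    (hlt : exNum ℓ HE M < #C) : ContainsCopy HE C := by
  by_contra hfree
  have hbdd : BddAbove {m : ℕ | ∃ D : Finset (Finset (Fin M)),
      (∀ e ∈ D, #e = ℓ) ∧ ¬ ContainsCopy HE D ∧ #D = m} :=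
    ⟨Fintype.card (Finset (Fin M)), by rintro _ ⟨D, -, -, rfl⟩; exact card_le_univ D⟩
  exact hlt.not_ge (le_csSup hbdd ⟨C, hC, hfree, rfl⟩)

theorem exists_copy_subset_of_exNum_lt (hC : ∀ e ∈ C, #e = ℓ) {S : Finset (Fin N)}
    (hS : exNum ℓ HE #S < #(C.filter (· ⊆ S))) :
    ∃ g : α ↪ Fin N, (∀ e ∈ HE, e.map g ∈ C) ∧ ∀ a, g a ∈ S := by
  set ψ : Fin #S ↪ Fin N := (S.orderEmbOfFin rfl).toEmbedding
  set C' : Finset (Finset (Fin #S)) := univ.filter (fun d => d.map ψ ∈ C)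
  have hC' : C'.map (mapEmbedding ψ).toEmbedding = C.filter (· ⊆ S) := by
    ext c
    have hcS : c ⊆ S ↔ ∃ d : Finset (Fin #S), d.map ψ = c := by
      conv_lhs => rw [← map_orderEmbOfFin_univ S rfl, subset_map_iff]
      simp only [subset_univ, true_and, eq_comm, ψ]
    simp only [C', mem_map, mem_filter, mem_univ, true_and, hcS]
    constructor
    · rintro ⟨d, hd, rfl⟩
      exact ⟨hd, d, rfl⟩
    · rintro ⟨hc, d, rfl⟩
      exact ⟨d, hc, rfl⟩
  obtain ⟨f, hf⟩ : ContainsCopy HE C' := by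
    refine containsCopy_of_exNum_lt_card (fun d hd => ?_) (by rwa [← hC', card_map] at hS)
    rw [← card_map ψ]
    exact hC _ (mem_filter.mp hd).2
  refine ⟨f.trans ψ, fun e he => ?_, fun a => ?_⟩
  · rw [← map_map]
    exact (mem_filter.mp (hf e he)).2
  · exact S.orderEmbOfFin_mem rfl (f a)

variable (ℓ M HE C) in
noncomputable def richSets : Finset (Finset (Fin N)) :=
  (powersetCard M univ).filter (fun S => exNum ℓ HE M < #(C.filter (· ⊆ S)))

theorem card_mul_choose_le_card_richSets_mul_add (hC : ∀ e ∈ C, #e = ℓ) (hℓM : ℓ ≤ M) :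
    #C * (N - ℓ).choose (M - ℓ) ≤
      #(richSets ℓ M HE C) * M.choose ℓ + N.choose M * exNum ℓ HE M := by
  have hsum := sum_card_filter_subset_powersetCard hC hℓM
  rw [Fintype.card_fin] at hsum
  rw [← hsum, ← sum_filter_add_sum_filter_not (powersetCard M univ)
    (fun S => exNum ℓ HE M < #(C.filter (· ⊆ S)))]
  gcongr
  · refine sum_le_card_nsmul _ _ _ fun S hS => ?_
    have hSM : #S = M := (mem_powersetCard.mp (mem_filter.mp hS).1).2
    calc #(C.filter (· ⊆ S)) ≤ #(S.powersetCard ℓ) :=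
          card_le_card fun e he =>
            mem_powersetCard.mpr ⟨(mem_filter.mp he).2, hC e (mem_filter.mp he).1⟩
      _ = M.choose ℓ := by rw [card_powersetCard, hSM]
  · calc _ ≤ ∑ _S ∈ (powersetCard M univ).filter _, exNum ℓ HE M :=
          sum_le_sum fun S hS => not_lt.mp (mem_filter.mp hS).2
      _ ≤ ∑ _S ∈ powersetCard M (univ : Finset (Fin N)), exNum ℓ HE M :=
          sum_le_sum_of_subset (filter_subset _ _)
      _ = N.choose M * exNum ℓ HE M := by
          rw [sum_const, card_powersetCard, card_univ, Fintype.card_fin, smul_eq_mul]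

theorem copyCount_eq_card_filter [Fintype α] [DecidableEq α] :
    copyCount HE C = #(univ.filter fun g : α ↪ Fin N => ∀ e ∈ HE, e.map g ∈ C) := by
  rw [copyCount, Nat.card_eq_fintype_card, Fintype.card_subtype]

theorem card_richSets_le [Fintype α] (hC : ∀ e ∈ C, #e = ℓ) (hvM : Fintype.card α ≤ M) :
    #(richSets ℓ M HE C) ≤
      copyCount HE C * (N - Fintype.card α).choose (M - Fintype.card α) := by
  classical
  set copies := univ.filter fun g : α ↪ Fin N => ∀ e ∈ HE, e.map g ∈ C
  have hcover : richSets ℓ M HE C ⊆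
      copies.biUnion fun g => (powersetCard M univ).filter (univ.map g ⊆ ·) := by
    intro S hS
    obtain ⟨hSM, hrich⟩ := mem_filter.mp hS
    rw [← (mem_powersetCard.mp hSM).2] at hrich
    obtain ⟨g, hg, hgS⟩ := exists_copy_subset_of_exNum_lt hC hrich
    refine mem_biUnion.mpr
      ⟨g, mem_filter.mpr ⟨mem_univ g, hg⟩, mem_filter.mpr ⟨hSM, ?_⟩⟩
    simpa [subset_iff] using hgS
  rw [copyCount_eq_card_filter]
  refine (card_le_card hcover).trans (card_biUnion_le_card_mul _ _ _ fun g _ => ?_)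
  have hg : #(univ.map g) = Fintype.card α := by rw [card_map, card_univ]
  rw [card_filter_powersetCard_subset _ _ _ (subset_univ _) (hg.trans_le hvM), hg, card_univ,
    Fintype.card_fin]

theorem mul_choose_lt_card_richSets {p δ : ℝ} (hC : ∀ e ∈ C, #e = ℓ) (hℓM : ℓ ≤ M)
    (hMN : M ≤ N) (hex : (exNum ℓ HE M : ℝ) ≤ p * M.choose ℓ)
    (hcard : (p + δ) * N.choose ℓ < #C) :
    δ * N.choose M < #(richSets ℓ M HE C) := by
  have hcount : ((#C * (N - ℓ).choose (M - ℓ) : ℕ) : ℝ) ≤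
      ((#(richSets ℓ M HE C) * M.choose ℓ + N.choose M * exNum ℓ HE M : ℕ) : ℝ) :=
    Nat.cast_le.mpr (card_mul_choose_le_card_richSets_mul_add hC hℓM)
  push_cast at hcount
  have hchoose : (N.choose M : ℝ) * M.choose ℓ =
      N.choose ℓ * ((N - ℓ).choose (M - ℓ) : ℕ) := by
    exact_mod_cast Nat.choose_mul hℓM
  have hX : (0 : ℝ) < ((N - ℓ).choose (M - ℓ) : ℕ) := by
    exact_mod_cast Nat.choose_pos (by omega)
  have hMℓ : (0 : ℝ) < M.choose ℓ := by exact_mod_cast Nat.choose_pos hℓM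
  have key : δ * N.choose M * M.choose ℓ + N.choose M * (p * M.choose ℓ) <
      #(richSets ℓ M HE C) * M.choose ℓ + N.choose M * (p * M.choose ℓ) :=
    calc δ * N.choose M * M.choose ℓ + N.choose M * (p * M.choose ℓ)
        = (p + δ) * N.choose ℓ * ((N - ℓ).choose (M - ℓ) : ℕ) := by
          linear_combination (p + δ) * hchoose
      _ < #C * ((N - ℓ).choose (M - ℓ) : ℕ) := by gcongr
      _ ≤ #(richSets ℓ M HE C) * M.choose ℓ + N.choose M * exNum ℓ HE M := hcount
      _ ≤ #(richSets ℓ M HE C) * M.choose ℓ + N.choose M * (p * M.choose ℓ) := by gcongr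
  exact lt_of_mul_lt_mul_right (by linarith) hMℓ.le

theorem mul_choose_lt_copyCount_mul_choose [Fintype α] {p δ : ℝ} (hC : ∀ e ∈ C, #e = ℓ)
    (hℓM : ℓ ≤ M) (hvM : Fintype.card α ≤ M) (hMN : M ≤ N)
    (hex : (exNum ℓ HE M : ℝ) ≤ p * M.choose ℓ) (hcard : (p + δ) * N.choose ℓ < #C) :
    δ * N.choose (Fintype.card α) < copyCount HE C * M.choose (Fintype.card α) := by
  set v := Fintype.card α
  have hrich := mul_choose_lt_card_richSets hC hℓM hMN hex hcard
  have hcover : #(richSets ℓ M HE C) * N.choose v ≤ copyCount HE C * M.choose v * N.choose M :=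
    calc #(richSets ℓ M HE C) * N.choose v
        ≤ copyCount HE C * (N - v).choose (M - v) * N.choose v :=
          Nat.mul_le_mul_right _ (card_richSets_le hC hvM)
      _ = copyCount HE C * M.choose v * N.choose M := by
          rw [mul_assoc, mul_comm _ (N.choose v), ← Nat.choose_mul hvM]; ring
  have hNv : (0 : ℝ) < N.choose v := by exact_mod_cast Nat.choose_pos (by omega)
  refine lt_of_mul_lt_mul_right ?_ (Nat.cast_nonneg (N.choose M))
  calc δ * N.choose v * N.choose M = δ * N.choose M * N.choose v := by ring
    _ < #(richSets ℓ M HE C) * N.choose v := by gcongr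
    _ ≤ copyCount HE C * M.choose v * N.choose M := by exact_mod_cast hcover

end Supersaturation

theorem supersaturation_general {α : Type*} [Fintype α] (ℓ : ℕ)
    (HE : Finset (Finset α))
    (π : ℝ)
    (hπ : Filter.Tendsto (fun N : ℕ => (exNum ℓ HE N : ℝ) / (N.choose ℓ : ℝ))
      Filter.atTop (nhds π))
    (ε : ℝ) (hε : 0 < ε) :
    ∃ N₀ : ℕ, ∃ η : ℝ, 0 < η ∧ ∀ N ≥ N₀, ∀ C : Finset (Finset (Fin N)),
      (∀ e ∈ C, e.card = ℓ) →
      (copyCount HE C : ℝ) ≤ η * (N : ℝ) ^ (Fintype.card α) →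
      (C.card : ℝ) ≤ (π + ε) * (N.choose ℓ : ℝ) := by
  set v := Fintype.card α
  obtain ⟨M, hexM, hM⟩ := ((hπ.eventually_lt_const (by linarith : π < π + ε / 2)).and
    (Filter.eventually_ge_atTop (ℓ + v))).exists
  have hMℓ : (0 : ℝ) < M.choose ℓ := by exact_mod_cast Nat.choose_pos (by omega)
  have hMv : (0 : ℝ) < M.choose v := by exact_mod_cast Nat.choose_pos (by omega)
  set η := ε / (2 ^ (v + 1) * v.factorial * M.choose v)
  refine ⟨M + 2 * v, η, by positivity, fun N hN C hC hcopy => ?_⟩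
  by_contra! hcard
  have hcopies := mul_choose_lt_copyCount_mul_choose hC (by omega) (by omega) (by omega)
    ((div_lt_iff₀ hMℓ).mp hexM).le (by linarith : (π + ε / 2 + ε / 2) * N.choose ℓ < #C)
  have hpow : (N : ℝ) ^ v ≤ 2 ^ v * v.factorial * N.choose v := by
    exact_mod_cast Nat.pow_le_two_pow_mul_factorial_mul_choose (by omega)
  refine (lt_irrefl (ε / 2 * N.choose v : ℝ)) ?_
  calc ε / 2 * N.choose v < copyCount HE C * M.choose v := hcopies
    _ ≤ η * N ^ v * M.choose v := by gcongr
    _ ≤ η * (2 ^ v * v.factorial * N.choose v) * M.choose v := by gcongr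
    _ = ε / 2 * N.choose v := by
        simp only [η]
        field_simp
        ring

/-- **Proposition (Erdős–Simonovits supersaturation).** Let `H` be an ℓ-graph with Turán density
`π(H)` and let `ε > 0`. There exist `N₀` and `η > 0` such that every ℓ-graph `C` on `N ≥ N₀`
vertices containing at most `η·N^{v(H)}` copies of `H` satisfies
`e(C) ≤ (π(H)+ε)·C(N,ℓ)`. -/
theorem supersaturation {α : Type*} [Fintype α] [DecidableEq α] (ℓ : ℕ)
    (HE : Finset (Finset α)) (hH : ∀ e ∈ HE, e.card = ℓ)
    (π : ℝ)
    (hπ : Filter.Tendsto (fun N : ℕ => (exNum ℓ HE N : ℝ) / (N.choose ℓ : ℝ))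
      Filter.atTop (nhds π))
    (ε : ℝ) (hε : 0 < ε) :
    ∃ N₀ : ℕ, ∃ η : ℝ, 0 < η ∧ ∀ N ≥ N₀, ∀ C : Finset (Finset (Fin N)),
      (∀ e ∈ C, e.card = ℓ) →
      (copyCount HE C : ℝ) ≤ η * (N : ℝ) ^ (Fintype.card α) →
      (C.card : ℝ) ≤ (π + ε) * (N.choose ℓ : ℝ) :=
  supersaturation_general ℓ HE π hπ ε hε
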